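/- Let A and B be nonempty curves in ℝ^d and let Q be a curve of k ≥ 1 points. Then dFr(A∘B, Q) = min( min_{1≤q≤k} max{ dFr(A, Q[1,q]), dFr(B, Q[q,k]) }, min_{1≤q≤k−1} max{ dFr(A, Q[1,q]), dFr(B, Q[q+1,k]) } ), where for k = 1 the second inner minimum (over an empty range) is omitted. -/

import Mathlib

noncomputable section

abbrev Pt (d : ℕ) : Type := EuclideanSpace ℝ (Fin d)

/-- Cost contribution of a single pair of blocks: the maximum distance between a point
of `A` and a point of `B` (0 if one of them is empty). -/
def pairCost {d : ℕ} (A B : List (Pt d)) : ℝ :=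
  (A.map fun p => (B.map fun q => dist p q).foldr max 0).foldr max 0

/-- `ω` is a paired walk along `P` and `Q`: the first components partition `P` into
consecutive nonempty blocks, the second components partition `Q`, and in each pair at
least one block is a single point. -/
def IsPairedWalk {d : ℕ} (ω : List (List (Pt d) × List (Pt d))) (P Q : List (Pt d)) : Prop :=
  (ω.map Prod.fst).flatten = P ∧ (ω.map Prod.snd).flatten = Q ∧
    ∀ pr ∈ ω, pr.1 ≠ [] ∧ pr.2 ≠ [] ∧ (pr.1.length = 1 ∨ pr.2.length = 1)

/-- The cost of a paired walk: the maximum over its pairs of the maximum distance between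
matched points. -/
def walkCost {d : ℕ} (ω : List (List (Pt d) × List (Pt d))) : ℝ :=
  (ω.map fun pr => pairCost pr.1 pr.2).foldr max 0

/-- The discrete Fréchet distance: the minimum cost over all paired walks along `P` and `Q`. -/
def dFr {d : ℕ} (P Q : List (Pt d)) : ℝ :=
  sInf {c : ℝ | ∃ ω, IsPairedWalk ω P Q ∧ walkCost ω = c}

section AuxLemmas
variable {d : ℕ}
variable {d : ℕ}

lemma foldr_max_nonneg (l : List ℝ) : 0 ≤ l.foldr max 0 := by
  induction l with
  | nil => simp
  | cons a l ih => exact le_trans ih (le_max_right _ _)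

lemma le_foldr_max {l : List ℝ} {x : ℝ} (h : x ∈ l) : x ≤ l.foldr max 0 := by
  induction l with
  | nil => simp at h
  | cons a l ih =>
    rcases List.mem_cons.mp h with h | h
    · exact h ▸ le_max_left _ _
    · exact le_trans (ih h) (le_max_right _ _)

lemma foldr_max_le {l : List ℝ} {c : ℝ} (h0 : 0 ≤ c) (h : ∀ x ∈ l, x ≤ c) :
    l.foldr max 0 ≤ c := by
  induction l with
  | nil => simpa
  | cons a l ih =>
    exact max_le (h a (by simp)) (ih fun x hx => h x (List.mem_cons_of_mem _ hx))

lemma pairCost_nonneg (A B : List (Pt d)) : 0 ≤ pairCost A B := foldr_max_nonneg _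

lemma dist_le_pairCost {A B : List (Pt d)} {p q : Pt d} (hp : p ∈ A) (hq : q ∈ B) :
    dist p q ≤ pairCost A B :=
  le_trans (le_foldr_max (List.mem_map_of_mem hq)) (le_foldr_max (List.mem_map_of_mem hp))

lemma pairCost_le {A B : List (Pt d)} {c : ℝ} (h0 : 0 ≤ c)
    (h : ∀ p ∈ A, ∀ q ∈ B, dist p q ≤ c) : pairCost A B ≤ c := by
  refine foldr_max_le h0 ?_
  intro x hx
  obtain ⟨p, hp, rfl⟩ := List.mem_map.mp hx
  refine foldr_max_le h0 ?_
  intro y hy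
  obtain ⟨q, hq, rfl⟩ := List.mem_map.mp hy
  exact h p hp q hq

lemma pairCost_mono {A B A' B' : List (Pt d)} (hA : ∀ p ∈ A', p ∈ A) (hB : ∀ q ∈ B', q ∈ B) :
    pairCost A' B' ≤ pairCost A B :=
  pairCost_le (pairCost_nonneg _ _) fun p hp q hq => dist_le_pairCost (hA p hp) (hB q hq)

lemma walkCost_nonneg (ω : List (List (Pt d) × List (Pt d))) : 0 ≤ walkCost ω :=
  foldr_max_nonneg _

lemma pairCost_le_walkCost {ω : List (List (Pt d) × List (Pt d))} {pr} (h : pr ∈ ω) :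
    pairCost pr.1 pr.2 ≤ walkCost ω :=
  le_foldr_max (List.mem_map_of_mem h)

lemma walkCost_le {ω : List (List (Pt d) × List (Pt d))} {c : ℝ} (h0 : 0 ≤ c)
    (h : ∀ pr ∈ ω, pairCost pr.1 pr.2 ≤ c) : walkCost ω ≤ c := by
  refine foldr_max_le h0 ?_
  intro x hx
  obtain ⟨pr, hpr, rfl⟩ := List.mem_map.mp hx
  exact h pr hpr

lemma walkCost_cons (pr : List (Pt d) × List (Pt d)) (ω) :
    walkCost (pr :: ω) = max (pairCost pr.1 pr.2) (walkCost ω) := rfl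

lemma dFr_bddBelow (P Q : List (Pt d)) :
    BddBelow {c : ℝ | ∃ ω, IsPairedWalk ω P Q ∧ walkCost ω = c} :=
  ⟨0, fun _ ⟨ω, _, hc⟩ => hc ▸ walkCost_nonneg ω⟩

lemma dFr_le_walkCost {P Q : List (Pt d)} {ω} (h : IsPairedWalk ω P Q) :
    dFr P Q ≤ walkCost ω :=
  csInf_le (dFr_bddBelow P Q) ⟨ω, h, rfl⟩

lemma exists_walk (P : List (Pt d)) : ∀ Q : List (Pt d), P ≠ [] → Q ≠ [] →
    ∃ ω, IsPairedWalk ω P Q := by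
  induction P with
  | nil => intro Q h; exact absurd rfl h
  | cons p P' ih =>
    intro Q _ hQ
    rcases P' with _ | ⟨p', P''⟩
    · exact ⟨[([p], Q)], by simp [IsPairedWalk], by simp [IsPairedWalk],
        by simp [IsPairedWalk, hQ]⟩
    · rcases Q with _ | ⟨q, Q'⟩
      · exact absurd rfl hQ
      rcases Q' with _ | ⟨q', Q''⟩
      · exact ⟨[(p :: p' :: P'', [q])], by simp [IsPairedWalk], by simp [IsPairedWalk],
          by simp [IsPairedWalk]⟩
      obtain ⟨ω', hf, hs, hl⟩ := ih (q' :: Q'') (by simp) (by simp)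
      refine ⟨([p], [q]) :: ω', by simp [hf], by simp [hs], ?_⟩
      intro pr hpr
      rcases List.mem_cons.mp hpr with rfl | hpr
      · simp
      · exact hl pr hpr

lemma dFr_nonneg {P Q : List (Pt d)} (hP : P ≠ []) (hQ : Q ≠ []) : 0 ≤ dFr P Q := by
  obtain ⟨ω, hω⟩ := exists_walk P Q hP hQ
  exact le_csInf ⟨walkCost ω, ω, hω, rfl⟩ fun c ⟨ω', _, hc⟩ => hc ▸ walkCost_nonneg ω'

lemma walk_snd_ne_nil {ω : List (List (Pt d) × List (Pt d))} {P Q : List (Pt d)}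
    (h : IsPairedWalk ω P Q) (hP : P ≠ []) : Q ≠ [] := by
  obtain ⟨hf, hs, hl⟩ := h
  rcases ω with _ | ⟨⟨F, E⟩, γ⟩
  · exact absurd hf.symm hP
  · intro hQ
    rw [← hs] at hQ
    simp only [List.map_cons, List.flatten_cons, List.append_eq_nil_iff] at hQ
    exact (hl (F, E) (by simp)).2.1 hQ.1

lemma glue_disjoint {ω₁ ω₂ : List (List (Pt d) × List (Pt d))} {A B T D : List (Pt d)}
    (h1 : IsPairedWalk ω₁ A T) (h2 : IsPairedWalk ω₂ B D) :
    IsPairedWalk (ω₁ ++ ω₂) (A ++ B) (T ++ D) ∧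
      walkCost (ω₁ ++ ω₂) ≤ max (walkCost ω₁) (walkCost ω₂) := by
  obtain ⟨hf1, hs1, hl1⟩ := h1; obtain ⟨hf2, hs2, hl2⟩ := h2
  refine ⟨⟨by simp [hf1, hf2], by simp [hs1, hs2], ?_⟩, ?_⟩
  · intro pr hpr; rcases List.mem_append.mp hpr with h | h
    exacts [hl1 pr h, hl2 pr h]
  · refine walkCost_le (le_max_of_le_left (walkCost_nonneg _)) ?_
    intro pr hpr; rcases List.mem_append.mp hpr with h | h
    · exact le_max_of_le_left (pairCost_le_walkCost h)
    · exact le_max_of_le_right (pairCost_le_walkCost h)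

lemma glue_shared {ω₁ ω₂ : List (List (Pt d) × List (Pt d))} {A B T D' : List (Pt d)} {x : Pt d}
    (h1 : IsPairedWalk ω₁ A (T ++ [x])) (h2 : IsPairedWalk ω₂ B (x :: D')) :
    ∃ ω, IsPairedWalk ω (A ++ B) (T ++ x :: D') ∧
      walkCost ω ≤ max (walkCost ω₁) (walkCost ω₂) := by
  obtain ⟨hf1, hs1, hl1⟩ := h1
  obtain ⟨hf2, hs2, hl2⟩ := h2
  rcases ω₂ with _ | ⟨⟨F, E⟩, γ⟩
  · exact absurd hs2 (by simp)
  simp only [List.map_cons, List.flatten_cons] at hf2 hs2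
  obtain ⟨hF, hE, hFE⟩ := hl2 (F, E) (by simp)
  rcases E with _ | ⟨e, E''⟩
  · exact absurd rfl hE
  obtain ⟨rfl, hD'⟩ : e = x ∧ E'' ++ (γ.map Prod.snd).flatten = D' := by
    have := hs2; rw [List.cons_append] at this; exact ⟨(List.cons_eq_cons.mp this).1,
      (List.cons_eq_cons.mp this).2⟩
  by_cases hE'' : E'' = []
  · -- E = [e]; decompose ω₁ from the back
    subst hE''
    obtain rfl | ⟨δ, ⟨G, H⟩, hω₁⟩ := List.eq_nil_or_concat ω₁
    · exact absurd hs1 (by simp)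
    rw [List.concat_eq_append] at hω₁
    subst hω₁
    simp only [List.map_append, List.flatten_append, List.map_cons, List.flatten_cons,
      List.map_nil, List.flatten_nil, List.append_nil] at hf1
    simp only [List.map_append, List.flatten_append, List.map_cons, List.flatten_cons,
      List.map_nil, List.flatten_nil, List.append_nil] at hs1
    obtain ⟨hG, hH, hGH⟩ := hl1 (G, H) (by simp)
    obtain rfl | ⟨H', h₀, hH₀⟩ := List.eq_nil_or_concat H
    · exact absurd rfl hH
    rw [List.concat_eq_append] at hH₀
    subst hH₀
    obtain ⟨hST, rfl⟩ : (δ.map Prod.snd).flatten ++ H' = T ∧ h₀ = e := by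
      rw [← List.append_assoc] at hs1
      obtain ⟨h1', h2'⟩ := List.append_inj' hs1 (by simp)
      exact ⟨h1', by simpa using h2'⟩
    simp only [List.nil_append] at hD'
    by_cases hH' : H' = []
    · -- merge (G ++ F, [h₀])
      subst hH'
      simp only [List.append_nil] at hST
      refine ⟨δ ++ (G ++ F, [h₀]) :: γ, ⟨?_, ?_, ?_⟩, ?_⟩
      · simp only [List.map_append, List.map_cons, List.flatten_append, List.flatten_cons]
        rw [← List.append_assoc, ← List.append_assoc]
        rw [List.append_assoc ((δ.map Prod.fst).flatten ++ G)]
        rw [show (δ.map Prod.fst).flatten ++ G = A from by simpa using hf1, hf2]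
      · simp only [List.map_append, List.map_cons, List.flatten_append, List.flatten_cons]
        rw [hST, hD']; simp
      · intro pr hpr
        rcases List.mem_append.mp hpr with h | h
        · exact hl1 pr (by simp [h])
        rcases List.mem_cons.mp h with rfl | h
        · exact ⟨by simp [hG], by simp, Or.inr rfl⟩
        · exact hl2 pr (by simp [h])
      · refine walkCost_le (le_max_of_le_left (walkCost_nonneg _)) ?_
        intro pr hpr
        rcases List.mem_append.mp hpr with h | h
        · exact le_max_of_le_left (pairCost_le_walkCost (by simp [h]))
        rcases List.mem_cons.mp h with rfl | h
        · refine pairCost_le (le_max_of_le_left (walkCost_nonneg _)) ?_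
          intro p hp q hq
          rcases List.mem_append.mp hp with hp | hp
          · exact le_max_of_le_left <| (dist_le_pairCost (B := [h₀]) hp (by simpa using hq)).trans
              (pairCost_le_walkCost (pr := (G, [h₀])) (by simp))
          · exact le_max_of_le_right <| (dist_le_pairCost (B := [h₀]) hp (by simpa using hq)).trans
              (pairCost_le_walkCost (pr := (F, [h₀])) (by simp))
        · exact le_max_of_le_right (pairCost_le_walkCost (by simp [h]))
    · -- keep (G, H') then ω₂
      refine ⟨δ ++ (G, H') :: (F, [h₀]) :: γ, ⟨?_, ?_, ?_⟩, ?_⟩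
      · simp only [List.map_append, List.map_cons, List.flatten_append, List.flatten_cons]
        rw [← List.append_assoc]
        rw [show (δ.map Prod.fst).flatten ++ G = A from by simpa using hf1, hf2]
      · simp only [List.map_append, List.map_cons, List.flatten_append, List.flatten_cons]
        rw [← List.append_assoc, hST, hD']; simp
      · intro pr hpr
        rcases List.mem_append.mp hpr with h | h
        · exact hl1 pr (by simp [h])
        rcases List.mem_cons.mp h with rfl | h
        · have : G.length = 1 := by
            rcases hGH with h' | h'
            · exact h'
            · exfalso; simp at h'; exact hH' h'
          exact ⟨hG, hH', Or.inl this⟩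
        rcases List.mem_cons.mp h with rfl | h
        · exact ⟨hF, by simp, Or.inr rfl⟩
        · exact hl2 pr (by simp [h])
      · refine walkCost_le (le_max_of_le_left (walkCost_nonneg _)) ?_
        intro pr hpr
        rcases List.mem_append.mp hpr with h | h
        · exact le_max_of_le_left (pairCost_le_walkCost (by simp [h]))
        rcases List.mem_cons.mp h with rfl | h
        · exact le_max_of_le_left <| (pairCost_mono (fun p hp => hp)
            (fun q hq => by simp [hq])).trans
            (pairCost_le_walkCost (pr := (G, H' ++ [h₀])) (by simp))
        rcases List.mem_cons.mp h with rfl | h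
        · exact le_max_of_le_right (pairCost_le_walkCost (pr := (F, [h₀])) (by simp))
        · exact le_max_of_le_right (pairCost_le_walkCost (by simp [h]))
  · -- E = x :: E'' with E'' ≠ []: keep ω₁ whole, then (F, E'') :: γ
    have hFlen : F.length = 1 := by
      rcases hFE with h' | h'
      · exact h'
      · exfalso; simp at h'
        exact hE'' h'
    refine ⟨ω₁ ++ (F, E'') :: γ, ⟨?_, ?_, ?_⟩, ?_⟩
    · simp only [List.map_append, List.map_cons, List.flatten_append, List.flatten_cons]
      rw [hf1, hf2]
    · simp only [List.map_append, List.map_cons, List.flatten_append, List.flatten_cons]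
      rw [hs1, hD']; simp
    · intro pr hpr
      rcases List.mem_append.mp hpr with h | h
      · exact hl1 pr h
      rcases List.mem_cons.mp h with rfl | h
      · exact ⟨hF, hE'', Or.inl hFlen⟩
      · exact hl2 pr (by simp [h])
    · refine walkCost_le (le_max_of_le_left (walkCost_nonneg _)) ?_
      intro pr hpr
      rcases List.mem_append.mp hpr with h | h
      · exact le_max_of_le_left (pairCost_le_walkCost h)
      rcases List.mem_cons.mp h with rfl | h
      · exact le_max_of_le_right <| (pairCost_mono (fun p hp => hp)
          (fun q hq => by simp [hq])).trans
          (pairCost_le_walkCost (pr := (F, e :: E'')) (by simp))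
      · exact le_max_of_le_right (pairCost_le_walkCost (by simp [h]))


lemma split_walk {B : List (Pt d)} (hB : B ≠ []) (ω : List (List (Pt d) × List (Pt d))) :
    ∀ A Q : List (Pt d), A ≠ [] → IsPairedWalk ω (A ++ B) Q →
    (∃ ω₁ ω₂ T x D', Q = T ++ x :: D' ∧
        IsPairedWalk ω₁ A (T ++ [x]) ∧ IsPairedWalk ω₂ B (x :: D') ∧
        walkCost ω₁ ≤ walkCost ω ∧ walkCost ω₂ ≤ walkCost ω) ∨
    (∃ ω₁ ω₂ T D, Q = T ++ D ∧ T ≠ [] ∧ D ≠ [] ∧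
        IsPairedWalk ω₁ A T ∧ IsPairedWalk ω₂ B D ∧
        walkCost ω₁ ≤ walkCost ω ∧ walkCost ω₂ ≤ walkCost ω) := by
  induction ω with
  | nil =>
    intro A Q hA h
    exact absurd (List.append_eq_nil_iff.mp h.1.symm).1 hA
  | cons pr ω' ih =>
    obtain ⟨F, E⟩ := pr
    intro A Q hA h
    obtain ⟨hf, hs, hl⟩ := h
    simp only [List.map_cons, List.flatten_cons] at hf hs
    obtain ⟨hF, hE, hFE⟩ := hl (F, E) (by simp)
    have hltail : ∀ pr ∈ ω', pr.1 ≠ [] ∧ pr.2 ≠ [] ∧ (pr.1.length = 1 ∨ pr.2.length = 1) :=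
      fun pr hpr => hl pr (by simp [hpr])
    have hcF : pairCost F E ≤ walkCost ((F, E) :: ω') :=
      pairCost_le_walkCost (pr := (F, E)) (by simp)
    have hcω' : walkCost ω' ≤ walkCost ((F, E) :: ω') := by
      rw [walkCost_cons]; exact le_max_right _ _
    rcases List.append_eq_append_iff.mp hf with ⟨A', hA1, hA2⟩ | ⟨c', hc1, hc2⟩
    · -- A = F ++ A'
      by_cases hA' : A' = []
      · -- A = F : disjoint split with T = E, D = rest
        subst hA'
        rw [List.append_nil] at hA1
        rw [List.nil_append] at hA2
        have hw2 : IsPairedWalk ω' B ((ω'.map Prod.snd).flatten) := ⟨hA2, rfl, hltail⟩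
        refine Or.inr ⟨[(F, E)], ω', E, (ω'.map Prod.snd).flatten, hs.symm, hE,
          walk_snd_ne_nil hw2 hB, ⟨by simp [hA1], by simp, ?_⟩, hw2, ?_, hcω'⟩
        · intro pr hpr
          rcases List.mem_cons.mp hpr with rfl | hpr
          · exact ⟨hF, hE, hFE⟩
          · simp at hpr
        · refine walkCost_le (le_trans (walkCost_nonneg _) hcω') ?_
          intro pr hpr
          rcases List.mem_cons.mp hpr with rfl | hpr
          · exact hcF
          · simp at hpr
      · -- recurse
        have hw' : IsPairedWalk ω' (A' ++ B) ((ω'.map Prod.snd).flatten) :=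
          ⟨by rw [hA2], rfl, hltail⟩
        rcases ih A' _ hA' hw' with ⟨ω₁', ω₂', T', x, D', hQ', h1, h2, c1, c2⟩ |
          ⟨ω₁', ω₂', T', D, hQ', hT', hD, h1, h2, c1, c2⟩
        · -- shared
          refine Or.inl ⟨(F, E) :: ω₁', ω₂', E ++ T', x, D', ?_, ⟨?_, ?_, ?_⟩, h2, ?_,
            le_trans c2 hcω'⟩
          · rw [← hs, hQ']; simp
          · simp [h1.1, hA1]
          · simp only [List.map_cons, List.flatten_cons, h1.2.1]; simp
          · intro pr hpr
            rcases List.mem_cons.mp hpr with rfl | hpr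
            · exact ⟨hF, hE, hFE⟩
            · exact h1.2.2 pr hpr
          · rw [walkCost_cons, walkCost_cons]
            exact max_le (le_max_left _ _) (le_trans c1 (le_max_right _ _))
        · -- disjoint
          refine Or.inr ⟨(F, E) :: ω₁', ω₂', E ++ T', D, ?_, by simp [hE], hD,
            ⟨?_, ?_, ?_⟩, h2, ?_, le_trans c2 hcω'⟩
          · rw [← hs, hQ']; simp
          · simp [h1.1, hA1]
          · simp only [List.map_cons, List.flatten_cons, h1.2.1]
          · intro pr hpr
            rcases List.mem_cons.mp hpr with rfl | hpr
            · exact ⟨hF, hE, hFE⟩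
            · exact h1.2.2 pr hpr
          · rw [walkCost_cons, walkCost_cons]
            exact max_le (le_max_left _ _) (le_trans c1 (le_max_right _ _))
    · -- F = A ++ c'
      by_cases hc' : c' = []
      · -- again A = F : disjoint split
        subst hc'
        rw [List.append_nil] at hc1
        rw [List.nil_append] at hc2
        have hw2 : IsPairedWalk ω' B ((ω'.map Prod.snd).flatten) := ⟨hc2.symm, rfl, hltail⟩
        refine Or.inr ⟨[(F, E)], ω', E, (ω'.map Prod.snd).flatten, hs.symm, hE,
          walk_snd_ne_nil hw2 hB, ⟨by simp [hc1], by simp, ?_⟩, hw2, ?_, hcω'⟩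
        · intro pr hpr
          rcases List.mem_cons.mp hpr with rfl | hpr
          · exact ⟨hF, hE, hFE⟩
          · simp at hpr
        · refine walkCost_le (le_trans (walkCost_nonneg _) hcω') ?_
          intro pr hpr
          rcases List.mem_cons.mp hpr with rfl | hpr
          · exact hcF
          · simp at hpr
      · -- straddle: shared split with T = []
        have hF2 : 2 ≤ F.length := by
          rw [hc1, List.length_append]
          have := List.length_pos_iff.mpr hA
          have := List.length_pos_iff.mpr hc'
          omega
        have hE1 : E.length = 1 := by
          rcases hFE with h' | h'
          · exfalso; simp at h'; omega
          · simpa using h'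
        obtain ⟨x, rfl⟩ := List.length_eq_one_iff.mp hE1
        refine Or.inl ⟨[(A, [x])], (c', [x]) :: ω', [], x, (ω'.map Prod.snd).flatten,
          by rw [← hs]; simp, ⟨by simp, by simp, ?_⟩, ⟨?_, by simp, ?_⟩, ?_, ?_⟩
        · intro pr hpr
          rcases List.mem_cons.mp hpr with rfl | hpr
          · exact ⟨hA, by simp, Or.inr rfl⟩
          · simp at hpr
        · simp only [List.map_cons, List.flatten_cons]
          exact hc2.symm
        · intro pr hpr
          rcases List.mem_cons.mp hpr with rfl | hpr
          · exact ⟨hc', by simp, Or.inr rfl⟩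
          · exact hltail pr hpr
        · refine walkCost_le (le_trans (walkCost_nonneg _) hcω') ?_
          intro pr hpr
          rcases List.mem_cons.mp hpr with rfl | hpr
          · exact le_trans (pairCost_mono (fun p hp => by rw [hc1]; exact List.mem_append_left _ hp)
              (fun q hq => hq)) hcF
          · simp at hpr
        · rw [walkCost_cons]
          refine max_le (le_trans (pairCost_mono
            (fun p hp => by rw [hc1]; exact List.mem_append_right _ hp) (fun q hq => hq)) hcF) hcω'

end AuxLemmas

/-- Splitting formula for the discrete Fréchet distance of a concatenation `A ∘ B` against
a query `Q` of `k` points: `dFr (A∘B) Q` is the minimum, over all ways to split `Q`, of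
`max (dFr A Q[1,q]) (dFr B Q[q,k])` for `1 ≤ q ≤ k` (the split point is shared) and of
`max (dFr A Q[1,q]) (dFr B Q[q+1,k])` for `1 ≤ q ≤ k−1` (a disjoint split).
Here `Q.take q = Q[1,q]`, `Q.drop (q-1) = Q[q,k]` and `Q.drop q = Q[q+1,k]`
(in the paper's 1-indexed notation). -/
theorem dFr_append_eq_min_split {d : ℕ} (A B Q : List (Pt d)) (hA : A ≠ []) (hB : B ≠ [])
    (k : ℕ) (hk : 1 ≤ k) (hQ : Q.length = k) :
    dFr (A ++ B) Q =
      sInf ({x : ℝ | ∃ q : ℕ, 1 ≤ q ∧ q ≤ k ∧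
              x = max (dFr A (Q.take q)) (dFr B (Q.drop (q - 1)))} ∪
            {x : ℝ | ∃ q : ℕ, 1 ≤ q ∧ q ≤ k - 1 ∧
              x = max (dFr A (Q.take q)) (dFr B (Q.drop q))}) := by
  have hQne : Q ≠ [] := by
    intro h; rw [h] at hQ; simp at hQ; omega
  have hABne : A ++ B ≠ [] := by simp [hA]
  have htake : ∀ q : ℕ, 1 ≤ q → Q.take q ≠ [] := by
    intro q hq h
    have := congrArg List.length h
    simp [hQ] at this; omega
  have hdrop : ∀ q : ℕ, q < k → Q.drop q ≠ [] := by
    intro q hq h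
    have := congrArg List.length h
    simp [hQ] at this; omega
  obtain ⟨ω₀, hω₀⟩ := exists_walk (A ++ B) Q hABne hQne
  have hSbdd : BddBelow ({x : ℝ | ∃ q : ℕ, 1 ≤ q ∧ q ≤ k ∧
              x = max (dFr A (Q.take q)) (dFr B (Q.drop (q - 1)))} ∪
            {x : ℝ | ∃ q : ℕ, 1 ≤ q ∧ q ≤ k - 1 ∧
              x = max (dFr A (Q.take q)) (dFr B (Q.drop q))}) := by
    refine ⟨0, ?_⟩
    rintro x (⟨q, hq1, hqk, rfl⟩ | ⟨q, hq1, hqk, rfl⟩)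
    · exact le_trans (dFr_nonneg hA (htake q hq1)) (le_max_left _ _)
    · exact le_trans (dFr_nonneg hA (htake q hq1)) (le_max_left _ _)
  refine le_antisymm ?_ ?_
  · -- dFr ≤ sInf
    refine le_csInf ⟨_, Set.mem_union_left _ ⟨k, hk, le_refl k, rfl⟩⟩ ?_
    rintro x (⟨q, hq1, hqk, rfl⟩ | ⟨q, hq1, hqk, rfl⟩)
    · -- shared split
      refine le_of_forall_pos_le_add fun ε hε => ?_
      have hTne : Q.take q ≠ [] := htake q hq1
      have hDne : Q.drop (q - 1) ≠ [] := hdrop (q - 1) (by omega)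
      obtain ⟨ωA, hωA⟩ := exists_walk A _ hA hTne
      obtain ⟨ωB, hωB⟩ := exists_walk B _ hB hDne
      obtain ⟨c₁, ⟨ω₁, hw₁, rfl⟩, hc₁⟩ :=
        Real.lt_sInf_add_pos (s := {c : ℝ | ∃ ω, IsPairedWalk ω A (Q.take q) ∧ walkCost ω = c})
          ⟨walkCost ωA, ωA, hωA, rfl⟩ hε
      obtain ⟨c₂, ⟨ω₂, hw₂, rfl⟩, hc₂⟩ :=
        Real.lt_sInf_add_pos
          (s := {c : ℝ | ∃ ω, IsPairedWalk ω B (Q.drop (q - 1)) ∧ walkCost ω = c})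
          ⟨walkCost ωB, ωB, hωB, rfl⟩ hε
      have hc₁' : walkCost ω₁ < dFr A (Q.take q) + ε := hc₁
      have hc₂' : walkCost ω₂ < dFr B (Q.drop (q - 1)) + ε := hc₂
      have hyq : q - 1 < Q.length := by omega
      have hTq : Q.take q = Q.take (q - 1) ++ [Q[q - 1]] := by
        conv_lhs => rw [show q = (q - 1) + 1 by omega]
        rw [List.take_succ]; simp [List.getElem?_eq_getElem hyq]
      have hDq : Q.drop (q - 1) = Q[q - 1] :: Q.drop q := by
        rw [List.drop_eq_getElem_cons hyq, show q - 1 + 1 = q by omega]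
      have hQsplit : Q = Q.take (q - 1) ++ Q[q - 1] :: Q.drop q := by
        conv_lhs => rw [← List.take_append_drop (q - 1) Q]
        rw [hDq]
      rw [hTq] at hw₁
      rw [hDq] at hw₂
      obtain ⟨ω, hw, hcost⟩ := glue_shared hw₁ hw₂
      rw [← hQsplit] at hw
      refine le_trans (dFr_le_walkCost hw) (le_trans hcost ?_)
      exact max_le (le_trans hc₁'.le (add_le_add_left (le_max_left _ _) ε))
        (le_trans hc₂'.le (add_le_add_left (le_max_right _ _) ε))
    · -- disjoint split
      refine le_of_forall_pos_le_add fun ε hε => ?_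
      have hTne : Q.take q ≠ [] := htake q hq1
      have hDne : Q.drop q ≠ [] := hdrop q (by omega)
      obtain ⟨ωA, hωA⟩ := exists_walk A _ hA hTne
      obtain ⟨ωB, hωB⟩ := exists_walk B _ hB hDne
      obtain ⟨c₁, ⟨ω₁, hw₁, rfl⟩, hc₁⟩ :=
        Real.lt_sInf_add_pos (s := {c : ℝ | ∃ ω, IsPairedWalk ω A (Q.take q) ∧ walkCost ω = c})
          ⟨walkCost ωA, ωA, hωA, rfl⟩ hε
      obtain ⟨c₂, ⟨ω₂, hw₂, rfl⟩, hc₂⟩ :=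
        Real.lt_sInf_add_pos (s := {c : ℝ | ∃ ω, IsPairedWalk ω B (Q.drop q) ∧ walkCost ω = c})
          ⟨walkCost ωB, ωB, hωB, rfl⟩ hε
      have hc₁' : walkCost ω₁ < dFr A (Q.take q) + ε := hc₁
      have hc₂' : walkCost ω₂ < dFr B (Q.drop q) + ε := hc₂
      obtain ⟨hw, hcost⟩ := glue_disjoint hw₁ hw₂
      rw [List.take_append_drop q Q] at hw
      refine le_trans (dFr_le_walkCost hw) (le_trans hcost ?_)
      exact max_le (le_trans hc₁'.le (add_le_add_left (le_max_left _ _) ε))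
        (le_trans hc₂'.le (add_le_add_left (le_max_right _ _) ε))
  · -- sInf ≤ dFr
    refine le_csInf ⟨walkCost ω₀, ω₀, hω₀, rfl⟩ ?_
    rintro c ⟨ω, hw, rfl⟩
    rcases split_walk hB ω A Q hA hw with ⟨ω₁, ω₂, T, x, D', hQeq, h1, h2, c1, c2⟩ |
      ⟨ω₁, ω₂, T, D, hQeq, hT, hD, h1, h2, c1, c2⟩
    · -- shared
      have hkq : k = T.length + 1 + D'.length := by rw [← hQ, hQeq]; simp; omega
      have hTq : Q.take (T.length + 1) = T ++ [x] := by
        rw [hQeq, List.take_append]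
        simp
      have hDq : Q.drop (T.length + 1 - 1) = x :: D' := by
        rw [hQeq, show T.length + 1 - 1 = T.length from rfl]
        exact List.drop_left
      refine le_trans (csInf_le hSbdd (Set.mem_union_left _
        ⟨T.length + 1, by omega, by omega, rfl⟩)) ?_
      rw [hTq, hDq]
      exact max_le (le_trans (dFr_le_walkCost h1) c1) (le_trans (dFr_le_walkCost h2) c2)
    · -- disjoint
      have hkq : k = T.length + D.length := by rw [← hQ, hQeq]; simp
      have hT1 : 1 ≤ T.length := List.length_pos_iff.mpr hT
      have hD1 : 1 ≤ D.length := List.length_pos_iff.mpr hD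
      have hTq : Q.take T.length = T := by rw [hQeq]; exact List.take_left
      have hDq : Q.drop T.length = D := by rw [hQeq]; exact List.drop_left
      refine le_trans (csInf_le hSbdd (Set.mem_union_right _
        ⟨T.length, by omega, by omega, rfl⟩)) ?_
      rw [hTq, hDq]
      exact max_le (le_trans (dFr_le_walkCost h1) c1) (le_trans (dFr_le_walkCost h2) c2)
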